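/- Let A be a unital C*-algebra with the LP property and K the C*-algebra of compact operators on a separable infinite-dimensional Hilbert space. Then A ⊗ K has the LP property. -/

import Mathlib

/-- A topological star algebra has the LP property if the linear span of its
projections (self-adjoint idempotents) is dense. -/
def LPProperty (A : Type*) [NonUnitalRing A] [Star A] [Module ℂ A]
    [TopologicalSpace A] : Prop :=
  Dense (↑(Submodule.span ℂ {p : A | IsSelfAdjoint p ∧ IsIdempotentElem p}) : Set A)

/-!
Each `S n` is the range of a star homomorphism `ψ` out of a matrix algebra over `A`, and every
matrix is a sum of matrix units `single i j a`, so it suffices to put `ψ (single i j a)` in the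
closed span of the projections of `B`. By the C⋆-identity `a ↦ ψ (single i j a)` is contractive,
so by density in `A` we may take `a = p` a projection. For `i ≠ j`, `single i j p` is a linear
combination of the projections `single i i p`, `single j j p` and `p ⊗ ½(eᵢ + z eⱼ)(eᵢ + z eⱼ)*`
for `z = 1, I`, and `ψ` maps projections to projections.
-/

lemma lpProperty_iff {A : Type*} [NonUnitalRing A] [Star A] [Module ℂ A] [TopologicalSpace A] :
    LPProperty A ↔ Dense (Submodule.span ℂ {p : A | IsStarProjection p} : Set A) := by
  simp only [LPProperty, isStarProjection_iff, and_comm]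

lemma Submodule.map_span_isStarProjection_le {A B : Type*} [NonUnitalRing A] [StarRing A]
    [Module ℂ A] [NonUnitalRing B] [StarRing B] [Module ℂ B] (ψ : A →⋆ₙₐ[ℂ] B) :
    (Submodule.span ℂ {p : A | IsStarProjection p}).map (ψ : A →ₗ[ℂ] B) ≤
      Submodule.span ℂ {p : B | IsStarProjection p} :=
  (Submodule.map_span_le _ _ _).mpr fun _ hp ↦ Submodule.subset_span (hp.map ψ)

namespace Matrix

variable {n R : Type*} [Fintype n] [DecidableEq n]

def singleStarAlgHom [NonUnitalSemiring R] [StarRing R] [Module ℂ R] (i : n) :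
    R →⋆ₙₐ[ℂ] Matrix n n R where
  toFun := single i i
  map_add' := single_add i i
  map_zero' := single_zero i i
  map_smul' c a := (smul_single c i i a).symm
  map_mul' a b := (single_mul_single_same (c := a) i i i b).symm
  map_star' a := by simp [star_eq_conjTranspose, conjTranspose_single]

variable [NonUnitalRing R] [StarRing R] [Module ℂ R] [StarModule ℂ R] [IsScalarTower ℂ R R]
  [SMulCommClass ℂ R R]

lemma isStarProjection_two_inv_smul_single {p : R} (hp : IsStarProjection p) {i j : n}
    (hij : i ≠ j) {z : ℂ} (hz : star z * z = 1) :
    IsStarProjection ((2⁻¹ : ℂ) •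
      (single i i p + single i j (star z • p) + single j i (z • p) + single j j p)) := by
  have hpp : p * p = p := hp.isIdempotentElem
  have hz' : z * star z = 1 := by rwa [mul_comm]
  rw [isStarProjection_iff']
  constructor
  · simp only [mul_add, add_mul, single_mul_single_same,
      single_mul_single_of_ne _ _ _ _ hij, single_mul_single_of_ne _ _ _ _ hij.symm,
      smul_mul_assoc, mul_smul_comm, smul_smul, hz, hz', one_smul, hpp]
    module
  · simp only [star_smul, star_add, star_eq_conjTranspose, conjTranspose_single,
      hp.isSelfAdjoint.star_eq, star_star, star_inv₀, star_ofNat]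
    module

lemma single_mem_span_isStarProjection {p : R} (hp : IsStarProjection p) (i j : n) :
    single i j p ∈ Submodule.span ℂ {M : Matrix n n R | IsStarProjection M} := by
  set V := Submodule.span ℂ {M : Matrix n n R | IsStarProjection M}
  have hdiag (k : n) : single k k p ∈ V := Submodule.subset_span (hp.map (singleStarAlgHom k))
  rcases eq_or_ne i j with rfl | hij
  · exact hdiag i
  let M (z : ℂ) : Matrix n n R :=
    (2⁻¹ : ℂ) • (single i i p + single i j (star z • p) + single j i (z • p) + single j j p)
  have hM (z : ℂ) (hz : star z * z = 1) : M z ∈ V :=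
    Submodule.subset_span (isStarProjection_two_inv_smul_single hp hij hz)
  have hpolar : single i j p = M 1 + Complex.I • M Complex.I
      - ((1 + Complex.I) * 2⁻¹) • (single i i p + single j j p) := by
    simp only [M, ← smul_single, Complex.star_def, Complex.conj_I]
    match_scalars <;> ring_nf <;> norm_num [Complex.I_sq]
  rw [hpolar]
  exact sub_mem (add_mem (hM 1 (by simp)) (V.smul_mem _ (hM Complex.I (by simp))))
    (V.smul_mem _ (add_mem (hdiag i) (hdiag j)))

end Matrix

section CStarAlgebra

variable {n A B : Type*} [Fintype n] [DecidableEq n] [NonUnitalCStarAlgebra A]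
  [NonUnitalCStarAlgebra B]

open Matrix

lemma NonUnitalStarAlgHom.norm_map_single_le (ψ : Matrix n n A →⋆ₙₐ[ℂ] B) (i j : n) (a : A) :
    ‖ψ (single i j a)‖ ≤ ‖a‖ := by
  have hcorner : ‖ψ (single j j (star a * a))‖ ≤ ‖star a * a‖ :=
    NonUnitalStarAlgHom.norm_apply_le (ψ.comp (singleStarAlgHom j)) _
  have hstar : star (ψ (single i j a)) * ψ (single i j a) = ψ (single j j (star a * a)) := by
    rw [← map_star, ← map_mul, star_eq_conjTranspose, conjTranspose_single,
      single_mul_single_same]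
  rw [← hstar, CStarRing.norm_star_mul_self, CStarRing.norm_star_mul_self] at hcorner
  exact (mul_self_le_mul_self_iff (norm_nonneg _) (norm_nonneg _)).mpr hcorner

lemma LPProperty.map_single_mem_topologicalClosure (hA : LPProperty A)
    (ψ : Matrix n n A →⋆ₙₐ[ℂ] B) (i j : n) (a : A) :
    ψ (single i j a) ∈ (Submodule.span ℂ {p : B | IsStarProjection p}).topologicalClosure := by
  let f : A →ₗ[ℂ] B := (ψ : Matrix n n A →ₗ[ℂ] B) ∘ₗ singleLinearMap ℂ i j
  have hf : Continuous f :=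
    AddMonoidHomClass.continuous_of_bound f 1 fun a ↦
      (ψ.norm_map_single_le i j a).trans_eq (one_mul _).symm
  have hmaps : Set.MapsTo f (Submodule.span ℂ {p : A | IsStarProjection p})
      (Submodule.span ℂ {p : B | IsStarProjection p}) :=
    Submodule.map_le_iff_le_comap.mp <| (Submodule.map_span_le f _ _).mpr fun _ hp ↦
      Submodule.map_span_isStarProjection_le ψ
        ⟨_, single_mem_span_isStarProjection hp i j, rfl⟩
  rw [← SetLike.mem_coe, Submodule.topologicalClosure_coe]
  exact map_mem_closure (f := f) hf (lpProperty_iff.mp hA a) hmaps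

lemma LPProperty.range_subset_topologicalClosure (hA : LPProperty A)
    (ψ : Matrix n n A →⋆ₙₐ[ℂ] B) :
    Set.range ψ ⊆ (Submodule.span ℂ {p : B | IsStarProjection p}).topologicalClosure := by
  rintro _ ⟨m, rfl⟩
  rw [matrix_eq_sum_single m, map_sum]
  refine Submodule.sum_mem _ fun i _ ↦ ?_
  rw [map_sum]
  exact Submodule.sum_mem _ fun j _ ↦ hA.map_single_mem_topologicalClosure ψ i j (m i j)

end CStarAlgebra

theorem linear_span_stmt19_general {A B : Type*} [CStarAlgebra A] [NonUnitalCStarAlgebra B]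
    (S : ℕ → NonUnitalStarSubalgebra ℂ B)
    (hdense : Dense (⋃ n, (S n : Set B)))
    (φ : ∀ n : ℕ, Matrix (Fin (n + 1)) (Fin (n + 1)) A →⋆ₙₐ[ℂ] B)
    (hrange : ∀ n, Set.range (φ n) = (S n : Set B))
    (hA : LPProperty A) : LPProperty B := by
  have hsub : ⋃ n, (S n : Set B) ⊆
      (Submodule.span ℂ {p : B | IsStarProjection p}).topologicalClosure :=
    Set.iUnion_subset fun n ↦ hrange n ▸ hA.range_subset_topologicalClosure (φ n)
  rw [lpProperty_iff, ← dense_closure, ← Submodule.topologicalClosure_coe]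
  exact hdense.mono hsub

/-- If a unital C*-algebra `A` has the LP property, then so does
`A ⊗ K` (`K` the compact operators on a separable infinite-dimensional Hilbert
space).  Here `A ⊗ K` is presented as a C*-algebra `B` which is the closure of an
increasing union of C*-subalgebras `S n`, each *-isomorphic to the matrix algebra
`M_{n+1}(A)`. -/
theorem linear_span_stmt19 {A B : Type*} [CStarAlgebra A] [NonUnitalCStarAlgebra B]
    (S : ℕ → NonUnitalStarSubalgebra ℂ B) (hmono : Monotone S)
    (hdense : Dense (⋃ n, (S n : Set B)))
    (φ : ∀ n : ℕ, Matrix (Fin (n + 1)) (Fin (n + 1)) A →⋆ₙₐ[ℂ] B)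
    (hinj : ∀ n, Function.Injective (φ n))
    (hrange : ∀ n, Set.range (φ n) = (S n : Set B))
    (hA : LPProperty A) : LPProperty B :=
  linear_span_stmt19_general S hdense φ hrange hA
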